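/- arXiv:2206.00159 — 2 statements merged into one kernel-verified Lean document; each statement's English description precedes it below -/
import Mathlib

section
/- Let m ≥ 1, A_j finite sets, and π_j, π'_j ∈ Δ(A_j) with ‖π_j − π'_j‖₁ ≤ ε for all j ∈ [m]. Let π(a) = Π_j π_j(a_j) and π'(a) = Π_j π'_j(a_j) on A = Π_j A_j. Then for any subset K ⊆ A and any function n : A → ℝ with n(a) ≥ 1 for all a, | sqrt( Σ_{a∈K} π(a)²/n(a) ) − sqrt( Σ_{a∈K} π'(a)²/n(a) ) | ≤ sqrt(2mε). -/
/-!
Since `|√x - √y| ≤ √|x - y|`, it suffices to bound the difference of the two weighted sums by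
`2 m ε`. All product probabilities lie in `[0, 1]` and `n ≥ 1`, so that difference is at most
twice the L1 distance between the product distributions, which in turn is at most the sum of the
coordinatewise L1 distances: peel off one coordinate at a time using
`x X - y Y = (x - y) X + y (X - Y)`.
-/

open Finset

lemma Real.abs_sqrt_sub_sqrt_le_sqrt_abs_sub {x y : ℝ} (hx : 0 ≤ x) (hy : 0 ≤ y) :
    |√x - √y| ≤ √|x - y| := by
  have hsum : |√x - √y| ≤ √x + √y :=
    abs_sub_le_iff.2 ⟨by linarith [Real.sqrt_nonneg y], by linarith [Real.sqrt_nonneg x]⟩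
  refine Real.le_sqrt_of_sq_le ?_
  calc |√x - √y| ^ 2 ≤ |√x - √y| * (√x + √y) := by rw [sq]; gcongr
    _ = |(√x - √y) * (√x + √y)| := by
      rw [abs_mul, abs_of_nonneg ((abs_nonneg _).trans hsum)]
    _ = |x - y| := by congr 1; linear_combination Real.sq_sqrt hx - Real.sq_sqrt hy

lemma abs_sq_sub_sq_le_two_mul {p q : ℝ} (hp : |p| ≤ 1) (hq : |q| ≤ 1) :
    |p ^ 2 - q ^ 2| ≤ 2 * |p - q| := by
  rw [sq_sub_sq, abs_mul]
  gcongr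
  calc |p + q| ≤ |p| + |q| := abs_add_le p q
    _ ≤ 2 := by linarith

lemma sum_abs_mul_sub_mul_le {α β : Type*} [Fintype α] [Fintype β] (f g : α → ℝ) (F G : β → ℝ)
    (hg : ∀ a, 0 ≤ g a) (hF : ∀ b, 0 ≤ F b) :
    ∑ a, ∑ b, |f a * F b - g a * G b|
      ≤ (∑ a, |f a - g a|) * (∑ b, F b) + (∑ a, g a) * ∑ b, |F b - G b| := by
  have hpoint : ∀ a b, |f a * F b - g a * G b| ≤ |f a - g a| * F b + g a * |F b - G b| := by
    intro a b
    calc |f a * F b - g a * G b| = |(f a - g a) * F b + g a * (F b - G b)| := by congr 1; ring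
      _ ≤ |(f a - g a) * F b| + |g a * (F b - G b)| := abs_add_le _ _
      _ = |f a - g a| * F b + g a * |F b - G b| := by
        rw [abs_mul, abs_mul, abs_of_nonneg (hF b), abs_of_nonneg (hg a)]
  calc ∑ a, ∑ b, |f a * F b - g a * G b|
      ≤ ∑ a, ∑ b, (|f a - g a| * F b + g a * |F b - G b|) :=
        sum_le_sum fun a _ => sum_le_sum fun b _ => hpoint a b
    _ = _ := by simp only [sum_add_distrib, ← mul_sum, ← sum_mul]

lemma sum_prod_eq_one {ι : Type*} [Fintype ι] [DecidableEq ι] {A : ι → Type*}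
    [∀ j, Fintype (A j)] {f : ∀ j, A j → ℝ} (hf : ∀ j, ∑ b, f j b = 1) :
    ∑ a : ∀ j, A j, ∏ j, f j (a j) = 1 := by
  rw [← Fintype.prod_sum, Fintype.prod_eq_one _ hf]

theorem sum_abs_prod_sub_prod_le {m : ℕ} {A : Fin m → Type*} [∀ j, Fintype (A j)]
    {f g : ∀ j, A j → ℝ} (hf0 : ∀ j b, 0 ≤ f j b) (hf1 : ∀ j, ∑ b, f j b = 1)
    (hg0 : ∀ j b, 0 ≤ g j b) (hg1 : ∀ j, ∑ b, g j b = 1) :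
    ∑ a : ∀ j, A j, |∏ j, f j (a j) - ∏ j, g j (a j)| ≤ ∑ j, ∑ b, |f j b - g j b| := by
  induction m with
  | zero => simp
  | succ k ih =>
    have htail := ih (A := fun i => A i.succ) (fun i => hf0 i.succ) (fun i => hf1 i.succ)
      (fun i => hg0 i.succ) (fun i => hg1 i.succ)
    rw [← (Fin.consEquiv A).sum_comp, Fintype.sum_prod_type, Fin.sum_univ_succ]
    simp only [Fin.consEquiv_apply, Fin.prod_univ_succ, Fin.cons_zero, Fin.cons_succ]
    refine (sum_abs_mul_sub_mul_le _ _ _ _ (hg0 0)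
      fun r => prod_nonneg fun i _ => hf0 i.succ (r i)).trans ?_
    rw [sum_prod_eq_one (fun i => hf1 i.succ), hg1 0, mul_one, one_mul]
    gcongr

lemma abs_prod_le_one {ι : Type*} [Fintype ι] {A : ι → Type*} [∀ j, Fintype (A j)]
    {f : ∀ j, A j → ℝ} (hf0 : ∀ j b, 0 ≤ f j b) (hf1 : ∀ j, ∑ b, f j b = 1) (a : ∀ j, A j) :
    |∏ j, f j (a j)| ≤ 1 := by
  rw [abs_prod]
  refine prod_le_one (fun j _ => abs_nonneg _) fun j _ => ?_
  rw [abs_of_nonneg (hf0 j (a j)), ← hf1 j]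
  exact single_le_sum (fun b _ => hf0 j b) (mem_univ _)

lemma abs_sum_sq_div_sub_sum_sq_div_le {α : Type*} [Fintype α] (K : Finset α) {p q n : α → ℝ}
    (hp : ∀ a, |p a| ≤ 1) (hq : ∀ a, |q a| ≤ 1) (hn : ∀ a, 1 ≤ n a) :
    |∑ a ∈ K, p a ^ 2 / n a - ∑ a ∈ K, q a ^ 2 / n a| ≤ 2 * ∑ a, |p a - q a| := by
  calc |∑ a ∈ K, p a ^ 2 / n a - ∑ a ∈ K, q a ^ 2 / n a|
      = |∑ a ∈ K, (p a ^ 2 - q a ^ 2) / n a| := by rw [← sum_sub_distrib]; simp only [sub_div]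
    _ ≤ ∑ a ∈ K, |(p a ^ 2 - q a ^ 2) / n a| := abs_sum_le_sum_abs _ _
    _ ≤ ∑ a ∈ K, 2 * |p a - q a| := by
      gcongr with a
      rw [abs_div, abs_of_pos (zero_lt_one.trans_le (hn a))]
      exact (div_le_self (abs_nonneg _) (hn a)).trans (abs_sq_sub_sq_le_two_mul (hp a) (hq a))
    _ ≤ ∑ a, 2 * |p a - q a| := sum_le_univ_sum_of_nonneg fun a => by positivity
    _ = 2 * ∑ a, |p a - q a| := (mul_sum _ _ _).symm

theorem stmt_6_general {m : ℕ} {A : Fin m → Type} [∀ j, Fintype (A j)]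
    (π π' : ∀ j, A j → ℝ)
    (hπ0 : ∀ j a, 0 ≤ π j a) (hπ1 : ∀ j, ∑ a, π j a = 1)
    (hπ'0 : ∀ j a, 0 ≤ π' j a) (hπ'1 : ∀ j, ∑ a, π' j a = 1)
    (ε : ℝ) (hε : ∀ j, ∑ a, |π j a - π' j a| ≤ ε)
    (K : Finset (∀ j, A j)) (n : (∀ j, A j) → ℝ) (hn : ∀ a, 1 ≤ n a) :
    |Real.sqrt (∑ a ∈ K, (∏ j, π j (a j)) ^ 2 / n a)
      - Real.sqrt (∑ a ∈ K, (∏ j, π' j (a j)) ^ 2 / n a)|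
      ≤ Real.sqrt (2 * (m : ℝ) * ε) := by
  have hnonneg : ∀ p : (∀ j, A j) → ℝ, 0 ≤ ∑ a ∈ K, p a ^ 2 / n a := fun p =>
    sum_nonneg fun a _ => div_nonneg (sq_nonneg _) (zero_le_one.trans (hn a))
  refine (Real.abs_sqrt_sub_sqrt_le_sqrt_abs_sub (hnonneg _) (hnonneg _)).trans
    (Real.sqrt_le_sqrt ?_)
  calc _ ≤ 2 * ∑ a : ∀ j, A j, |∏ j, π j (a j) - ∏ j, π' j (a j)| :=
        abs_sum_sq_div_sub_sum_sq_div_le K (abs_prod_le_one hπ0 hπ1)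
          (abs_prod_le_one hπ'0 hπ'1) hn
    _ ≤ 2 * ∑ j, ∑ b, |π j b - π' j b| := by
        gcongr; exact sum_abs_prod_sub_prod_le hπ0 hπ1 hπ'0 hπ'1
    _ ≤ 2 * ∑ _j : Fin m, ε := by gcongr with j; exact hε j
    _ = 2 * m * ε := by rw [sum_const, card_univ, Fintype.card_fin, nsmul_eq_mul, mul_assoc]

/-- If each marginal `π_j` is within `ε` of `π'_j` in L1, then the square-root weighted sums
`sqrt(Σ_{a∈K} π(a)²/n(a))` differ by at most `sqrt(2mε)`. -/
theorem stmt_6 {m : ℕ} (hm : 1 ≤ m) {A : Fin m → Type} [∀ j, Fintype (A j)]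
    [∀ j, DecidableEq (A j)]
    (π π' : ∀ j, A j → ℝ)
    (hπ0 : ∀ j a, 0 ≤ π j a) (hπ1 : ∀ j, ∑ a, π j a = 1)
    (hπ'0 : ∀ j a, 0 ≤ π' j a) (hπ'1 : ∀ j, ∑ a, π' j a = 1)
    (ε : ℝ) (hε : ∀ j, ∑ a, |π j a - π' j a| ≤ ε)
    (K : Finset (∀ j, A j)) (n : (∀ j, A j) → ℝ) (hn : ∀ a, 1 ≤ n a) :
    |Real.sqrt (∑ a ∈ K, (∏ j, π j (a j)) ^ 2 / n a)
      - Real.sqrt (∑ a ∈ K, (∏ j, π' j (a j)) ^ 2 / n a)|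
      ≤ Real.sqrt (2 * (m : ℝ) * ε) :=
  stmt_6_general π π' hπ0 hπ1 hπ'0 hπ'1 ε hε K n hn
end

section
/- Let S and K be finite sets, d a probability distribution on S × K, n̂ : S × K → ℝ₊ with n̂(s,a) ≥ n·d̂(s,a) where d̂ is a distribution on S × K, and suppose d(s,a) ≤ C·d̂(s,a) for all (s,a) with some constant C ≥ 0. Then Σ_{s∈S} sqrt( Σ_{a∈K} d(s,a)² / n̂(s,a) ) ≤ sqrt( |S| · C / n ), where terms with n̂(s,a) = 0 are omitted (these have d(s,a) = 0). -/
open Finset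
open scoped Classical

theorem Real.sum_sqrt_le_sqrt_card_mul_sum {ι : Type*} (s : Finset ι) {g : ι → ℝ}
    (hg : ∀ i, 0 ≤ g i) :
    ∑ i ∈ s, √(g i) ≤ √(#s * ∑ i ∈ s, g i) := by
  have h := Real.sum_sqrt_mul_sqrt_le s (f := fun _ => (1 : ℝ)) (fun _ => zero_le_one) hg
  simpa [Real.sqrt_mul (Nat.cast_nonneg _)] using h

theorem sq_div_le_mul_div_of_le_mul {d dhat m n C : ℝ} (hn : 0 < n) (hC : 0 ≤ C)
    (hd : 0 ≤ d) (hdom : d ≤ C * dhat) (hm : n * dhat ≤ m) :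
    d ^ 2 / m ≤ d * (C / n) := by
  rcases le_or_gt m 0 with hm0 | hm0
  · exact (div_nonpos_of_nonneg_of_nonpos (sq_nonneg d) hm0).trans (by positivity)
  · rw [div_le_iff₀ hm0]
    calc d ^ 2 = d * d := sq d
      _ ≤ d * (C * dhat) := mul_le_mul_of_nonneg_left hdom hd
      _ = d * (C / n) * (n * dhat) := by field_simp
      _ ≤ d * (C / n) * m := mul_le_mul_of_nonneg_left hm (by positivity)

theorem stmt_15_general {S K : Type} [Fintype S] [Fintype K]
    (d dhat : S × K → ℝ) (nhat : S × K → ℝ) (n C : ℝ)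
    (hn : 0 < n) (hC : 0 ≤ C)
    (hd0 : ∀ x, 0 ≤ d x) (hd1 : ∑ x, d x = 1)
    (hnhat : ∀ x, n * dhat x ≤ nhat x)
    (hdom : ∀ x, d x ≤ C * dhat x) :
    ∑ s : S, Real.sqrt (∑ a ∈ Finset.univ.filter (fun a => nhat (s, a) ≠ 0),
        d (s, a) ^ 2 / nhat (s, a))
      ≤ Real.sqrt ((Fintype.card S : ℝ) * C / n) := by
  have hfilter (s : S) : ∑ a ∈ univ.filter (fun a => nhat (s, a) ≠ 0), d (s, a) ^ 2 / nhat (s, a)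
      = ∑ a, d (s, a) ^ 2 / nhat (s, a) :=
    sum_filter_of_ne fun a _ h hzero => h (by rw [hzero, div_zero])
  calc ∑ s : S, √(∑ a ∈ univ.filter (fun a => nhat (s, a) ≠ 0), d (s, a) ^ 2 / nhat (s, a))
      = ∑ s : S, √(∑ a, d (s, a) ^ 2 / nhat (s, a)) := by simp only [hfilter]
    _ ≤ ∑ s : S, √(∑ a, d (s, a) * (C / n)) := by
      gcongr with s _ a
      exact sq_div_le_mul_div_of_le_mul hn hC (hd0 _) (hdom _) (hnhat _)
    _ ≤ √(Fintype.card S * ∑ s : S, ∑ a, d (s, a) * (C / n)) :=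
      Real.sum_sqrt_le_sqrt_card_mul_sum univ fun s =>
        sum_nonneg fun a _ => mul_nonneg (hd0 _) (by positivity)
    _ = √(Fintype.card S * C / n) := by
      rw [← Fintype.sum_prod_type', ← sum_mul, hd1]
      ring_nf

/-- If `d ≤ C·d̂` and `n̂ ≥ n·d̂` pointwise, with `d`, `d̂` distributions on `S × K`, then
`Σ_s sqrt(Σ_a d(s,a)²/n̂(s,a)) ≤ sqrt(|S|·C/n)`, terms with `n̂(s,a) = 0` being omitted. -/
theorem stmt_15 {S K : Type} [Fintype S] [Fintype K]
    (d dhat : S × K → ℝ) (nhat : S × K → ℝ) (n C : ℝ)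
    (hn : 0 < n) (hC : 0 ≤ C)
    (hd0 : ∀ x, 0 ≤ d x) (hd1 : ∑ x, d x = 1)
    (hdhat0 : ∀ x, 0 ≤ dhat x) (hdhat1 : ∑ x, dhat x = 1)
    (hnhat0 : ∀ x, 0 ≤ nhat x)
    (hnhat : ∀ x, n * dhat x ≤ nhat x)
    (hdom : ∀ x, d x ≤ C * dhat x) :
    ∑ s : S, Real.sqrt (∑ a ∈ Finset.univ.filter (fun a => nhat (s, a) ≠ 0),
        d (s, a) ^ 2 / nhat (s, a))
      ≤ Real.sqrt ((Fintype.card S : ℝ) * C / n) :=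
  stmt_15_general d dhat nhat n C hn hC hd0 hd1 hnhat hdom
end
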